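/- For every n ≥ 1, the number of permutations of {1,...,n} containing exactly one occurrence of the generalized pattern 12-3 and exactly one occurrence of the generalized pattern 13-2 equals (n² - 7n + 14)·2^(n-3) - 2. -/

import Mathlib

/-- The value of the permutation at position `i` (0-indexed), or 0 if out of range. -/
def permVal {n : ℕ} (π : Equiv.Perm (Fin n)) (i : ℕ) : ℕ :=
  if h : i < n then (π ⟨i, h⟩ : ℕ) else 0

/-- Number of occurrences of the generalized pattern 12-3. -/
def occ12_3 {n : ℕ} (π : Equiv.Perm (Fin n)) : ℕ :=
  ((Finset.range n ×ˢ Finset.range n).filter (fun p =>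
    p.1 + 1 < p.2 ∧ permVal π p.1 < permVal π (p.1 + 1) ∧
      permVal π (p.1 + 1) < permVal π p.2)).card

/-- Number of occurrences of the generalized pattern 13-2. -/
def occ13_2 {n : ℕ} (π : Equiv.Perm (Fin n)) : ℕ :=
  ((Finset.range n ×ˢ Finset.range n).filter (fun p =>
    p.1 + 1 < p.2 ∧ permVal π p.1 < permVal π p.2 ∧
      permVal π p.2 < permVal π (p.1 + 1))).card

/-- Number of occurrences of the generalized pattern 21-3. -/
def occ21_3 {n : ℕ} (π : Equiv.Perm (Fin n)) : ℕ :=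
  ((Finset.range n ×ˢ Finset.range n).filter (fun p =>
    p.1 + 1 < p.2 ∧ permVal π (p.1 + 1) < permVal π p.1 ∧
      permVal π p.1 < permVal π p.2)).card

/-- Number of occurrences of the generalized pattern 23-1. -/
def occ23_1 {n : ℕ} (π : Equiv.Perm (Fin n)) : ℕ :=
  ((Finset.range n ×ˢ Finset.range n).filter (fun p =>
    p.1 + 1 < p.2 ∧ permVal π p.2 < permVal π p.1 ∧
      permVal π p.1 < permVal π (p.1 + 1))).card

/-- Number of occurrences of the generalized pattern 31-2. -/
def occ31_2 {n : ℕ} (π : Equiv.Perm (Fin n)) : ℕ :=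
  ((Finset.range n ×ˢ Finset.range n).filter (fun p =>
    p.1 + 1 < p.2 ∧ permVal π (p.1 + 1) < permVal π p.2 ∧
      permVal π p.2 < permVal π p.1)).card

/-- Number of occurrences of the generalized pattern 32-1. -/
def occ32_1 {n : ℕ} (π : Equiv.Perm (Fin n)) : ℕ :=
  ((Finset.range n ×ˢ Finset.range n).filter (fun p =>
    p.1 + 1 < p.2 ∧ permVal π p.2 < permVal π (p.1 + 1) ∧
      permVal π (p.1 + 1) < permVal π p.1)).card

/-!
Encode `π` by `c i = #{j ≥ i | π j ≥ π i}`, a variant of the Lehmer code; `π ↦ c` is a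
bijection onto the words with `1 ≤ c i ≤ n - i`. At an ascent `π i < π (i + 1)` the code drops,
`c (i + 1) < c i`, and position `i` starts `c (i + 1) - 1` occurrences of 12-3 and
`c i - c (i + 1) - 1` occurrences of 13-2; at a descent the code does not drop and no occurrence
starts. So we count code words whose drops contribute `(1, 1)` in total. Removing the first
letter gives a linear recursion in the first letter `r` and the remaining budget `(a, b)`; as
`r ≤ a + b + 2`, only finitely many states occur, and the recursion is solved by induction.
-/

open Finset

def extendByZero (m : ℕ) : (Fin m → ℕ) ↪ (ℕ → ℕ) where
  toFun w j := if h : j < m then w ⟨j, h⟩ else 0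
  inj' v w h := funext fun j => by simpa using congrFun h j

@[simp]
lemma extendByZero_apply {m : ℕ} (w : Fin m → ℕ) (j : ℕ) :
    extendByZero m w j = if h : j < m then w ⟨j, h⟩ else 0 := rfl

def codeWords (m : ℕ) : Finset (ℕ → ℕ) :=
  (Fintype.piFinset fun j : Fin m => Icc 1 (m - j)).map (extendByZero m)

lemma mem_codeWords {m : ℕ} {w : ℕ → ℕ} :
    w ∈ codeWords m ↔ (∀ j < m, 1 ≤ w j ∧ w j ≤ m - j) ∧ ∀ j, m ≤ j → w j = 0 := by
  simp only [codeWords, mem_map, Fintype.mem_piFinset, mem_Icc]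
  constructor
  · rintro ⟨v, hv, rfl⟩
    exact ⟨fun j hj => by simpa [hj] using hv ⟨j, hj⟩, fun j hj => by simp [hj.not_gt]⟩
  · rintro ⟨hlt, hge⟩
    refine ⟨fun j => w j, fun j => hlt j j.isLt, funext fun j => ?_⟩
    by_cases hj : j < m
    · simp [hj]
    · simp [hj, hge j (not_lt.1 hj)]

lemma card_codeWords (m : ℕ) : #(codeWords m) = m.factorial := by
  rw [codeWords, card_map, Fintype.card_piFinset, ← prod_range_add_one_eq_factorial,
    ← prod_range_reflect, ← Fin.prod_univ_eq_prod_range]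
  refine Fintype.prod_congr _ _ fun j => ?_
  rw [Nat.card_Icc]
  omega

def pairOcc12_3 (x y : ℕ) : ℕ := if y < x then y - 1 else 0
def pairOcc13_2 (x y : ℕ) : ℕ := if y < x then x - 1 - y else 0

def wordOcc12_3 (m : ℕ) (w : ℕ → ℕ) : ℕ := ∑ j ∈ range (m - 1), pairOcc12_3 (w j) (w (j + 1))
def wordOcc13_2 (m : ℕ) (w : ℕ → ℕ) : ℕ := ∑ j ∈ range (m - 1), pairOcc13_2 (w j) (w (j + 1))

section PermCode

variable {n : ℕ} (π : Equiv.Perm (Fin n))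

lemma permVal_lt {i : ℕ} (hi : i < n) : permVal π i < n := by
  simp [permVal, hi]

lemma permVal_inj {i j : ℕ} (hi : i < n) (hj : j < n) : permVal π i = permVal π j ↔ i = j := by
  simp [permVal, hi, hj, ← Fin.ext_iff]

lemma exists_permVal_eq {v : ℕ} (hv : v < n) : ∃ j < n, permVal π j = v :=
  ⟨π.symm ⟨v, hv⟩, (π.symm ⟨v, hv⟩).isLt, by simp [permVal]⟩

lemma Equiv.Perm.ext_permVal {π σ : Equiv.Perm (Fin n)}
    (h : ∀ i < n, permVal π i = permVal σ i) : π = σ := by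
  ext x
  simpa [permVal] using h x x.isLt

def permCode (i : ℕ) : ℕ := #{j ∈ range n | i ≤ j ∧ permVal π i ≤ permVal π j}

lemma permCode_mem_codeWords : permCode π ∈ codeWords n := by
  refine mem_codeWords.2 ⟨fun i hi => ⟨card_pos.2 ⟨i, by simp [hi]⟩, ?_⟩, fun i hi => ?_⟩
  · calc permCode π i ≤ #(Ico i n) := card_le_card fun j hj => by simp at hj ⊢; omega
      _ = n - i := Nat.card_Ico i n
  · exact card_eq_zero.2 (filter_eq_empty_iff.2 fun j hj => by simp at hj; omega)

lemma image_permVal_Ico (i : ℕ) :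
    (Ico i n).image (permVal π) = range n \ (range i).image (permVal π) := by
  ext v
  simp only [mem_image, mem_Ico, mem_sdiff, mem_range, not_exists, not_and]
  constructor
  · rintro ⟨j, ⟨hij, hj⟩, rfl⟩
    exact ⟨permVal_lt π hj, fun k hk hkj => by rw [permVal_inj π (by omega) hj] at hkj; omega⟩
  · rintro ⟨hv, hnot⟩
    obtain ⟨j, hj, rfl⟩ := exists_permVal_eq π hv
    exact ⟨j, ⟨not_lt.1 fun hji => hnot j hji rfl, hj⟩, rfl⟩

lemma permCode_eq_card_filter_image (i : ℕ) :
    permCode π i = #{x ∈ (Ico i n).image (permVal π) | permVal π i ≤ x} := by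
  rw [filter_image, card_image_of_injOn, permCode]
  · congr 1
    ext j
    simp only [mem_filter, mem_range, mem_Ico]
    omega
  · intro j hj k hk hjk
    simp only [coe_filter, mem_Ico, Set.mem_ofPred_eq] at hj hk
    exact (permVal_inj π hj.1.2 hk.1.2).1 hjk

variable {π} {i : ℕ}

lemma card_filter_range_eq_self (hi : i < n) : #{j ∈ range n | j = i} = 1 := by
  rw [filter_eq' (range n) i, if_pos (mem_range.2 hi), card_singleton]

lemma permCode_eq_of_lt (hi : i + 1 < n) (hasc : permVal π i < permVal π (i + 1)) :
    permCode π i = 1 + permCode π (i + 1) + #{j ∈ range n | i + 1 < j ∧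
      permVal π i < permVal π j ∧ permVal π j < permVal π (i + 1)} := by
  suffices permCode π i = #{j ∈ range n | j = i} + permCode π (i + 1) + #{j ∈ range n |
      i + 1 < j ∧ permVal π i < permVal π j ∧ permVal π j < permVal π (i + 1)} by
    rwa [card_filter_range_eq_self (by omega)] at this
  simp only [permCode, card_filter, ← sum_add_distrib]
  refine sum_congr rfl fun j hj => ?_
  have h0 := permVal_inj π (mem_range.1 hj) (by omega : i < n)
  have h1 := permVal_inj π (mem_range.1 hj) hi
  split_ifs <;> omega

lemma permCode_succ_eq_of_lt (hi : i + 1 < n) (hasc : permVal π i < permVal π (i + 1)) :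
    permCode π (i + 1) = 1 + #{j ∈ range n | i + 1 < j ∧
      permVal π i < permVal π (i + 1) ∧ permVal π (i + 1) < permVal π j} := by
  suffices permCode π (i + 1) = #{j ∈ range n | j = i + 1} + #{j ∈ range n | i + 1 < j ∧
      permVal π i < permVal π (i + 1) ∧ permVal π (i + 1) < permVal π j} by
    rwa [card_filter_range_eq_self hi] at this
  simp only [permCode, card_filter, ← sum_add_distrib]
  refine sum_congr rfl fun j hj => ?_
  have h1 := permVal_inj π (mem_range.1 hj) hi
  split_ifs <;> omega

lemma permCode_le_of_gt (hi : i + 1 < n) (hdesc : permVal π (i + 1) < permVal π i) :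
    permCode π i ≤ permCode π (i + 1) := by
  suffices permCode π i + #{j ∈ range n | j = i + 1} ≤
      permCode π (i + 1) + #{j ∈ range n | j = i} by
    rwa [card_filter_range_eq_self hi, card_filter_range_eq_self (by omega), add_le_add_iff_right]
      at this
  simp only [permCode, card_filter, ← sum_add_distrib]
  refine sum_le_sum fun j hj => ?_
  have h0 := permVal_inj π (mem_range.1 hj) (by omega : i < n)
  have h1 := permVal_inj π (mem_range.1 hj) hi
  split_ifs <;> omega

lemma card_filter_occ12_3_at (hi : i + 1 < n) :
    #{j ∈ range n | i + 1 < j ∧ permVal π i < permVal π (i + 1) ∧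
      permVal π (i + 1) < permVal π j} = pairOcc12_3 (permCode π i) (permCode π (i + 1)) := by
  rcases lt_or_gt_of_ne ((permVal_inj π hi (by omega : i < n)).not.2 (by omega)) with hdesc | hasc
  · rw [pairOcc12_3, if_neg (permCode_le_of_gt hi hdesc).not_gt, card_eq_zero,
      filter_eq_empty_iff]
    omega
  · have h1 := permCode_eq_of_lt hi hasc
    have h2 := permCode_succ_eq_of_lt hi hasc
    rw [pairOcc12_3, if_pos (by omega)]
    omega

lemma card_filter_occ13_2_at (hi : i + 1 < n) :
    #{j ∈ range n | i + 1 < j ∧ permVal π i < permVal π j ∧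
      permVal π j < permVal π (i + 1)} = pairOcc13_2 (permCode π i) (permCode π (i + 1)) := by
  rcases lt_or_gt_of_ne ((permVal_inj π hi (by omega : i < n)).not.2 (by omega)) with hdesc | hasc
  · rw [pairOcc13_2, if_neg (permCode_le_of_gt hi hdesc).not_gt, card_eq_zero,
      filter_eq_empty_iff]
    omega
  · have h1 := permCode_eq_of_lt hi hasc
    rw [pairOcc13_2, if_pos (by omega)]
    omega

lemma strictAntiOn_card_filter_le {α : Type*} [LinearOrder α] (S : Finset α) :
    StrictAntiOn (fun x => #{z ∈ S | x ≤ z}) S := by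
  intro x hx y _ hxy
  refine card_lt_card ⟨monotone_filter_right S fun _ _ => hxy.le.trans, fun h => ?_⟩
  have := (mem_filter.1 (h (mem_filter.2 ⟨hx, le_rfl⟩))).2
  exact absurd hxy (not_lt.2 this)

lemma permCode_injective : Function.Injective (permCode (n := n)) := by
  intro π σ h
  refine Equiv.Perm.ext_permVal fun i => Nat.strong_induction_on i fun i ih hi => ?_
  have hprefix : (range i).image (permVal π) = (range i).image (permVal σ) :=
    image_congr fun k hk => ih k (mem_range.1 hk) (by simp at hk; omega)
  have hsuffix : (Ico i n).image (permVal π) = (Ico i n).image (permVal σ) := by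
    rw [image_permVal_Ico, image_permVal_Ico, hprefix]
  have hmem (τ : Equiv.Perm (Fin n)) : permVal τ i ∈ (Ico i n).image (permVal τ) :=
    mem_image_of_mem _ (mem_Ico.2 ⟨le_rfl, hi⟩)
  have hcode := congrFun h i
  rw [permCode_eq_card_filter_image, permCode_eq_card_filter_image, hsuffix] at hcode
  exact (strictAntiOn_card_filter_le _).injOn (hsuffix ▸ hmem π) (hmem σ) hcode

lemma card_filter_range_product {q : ℕ → ℕ → Prop} [∀ i j, Decidable (q i j)]
    (hq : ∀ i j, q i j → i + 1 < j) :
    #{p ∈ range n ×ˢ range n | q p.1 p.2} = ∑ i ∈ range (n - 1), #{j ∈ range n | q i j} := by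
  rw [card_filter, sum_product, ← sum_subset (range_subset_range.2 (Nat.sub_le n 1))]
  · exact sum_congr rfl fun i _ => (card_filter _ _).symm
  · intro i hi hi'
    simp only [mem_range] at hi hi'
    rw [← card_filter, card_eq_zero, filter_eq_empty_iff]
    intro j hj hij
    have := hq i j hij
    simp only [mem_range] at hj
    omega

lemma occ12_3_eq_wordOcc12_3 : occ12_3 π = wordOcc12_3 n (permCode π) := by
  rw [occ12_3, card_filter_range_product (q := fun i j => i + 1 < j ∧
    permVal π i < permVal π (i + 1) ∧ permVal π (i + 1) < permVal π j) fun _ _ h => h.1]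
  exact sum_congr rfl fun i hi => card_filter_occ12_3_at (by simp at hi; omega)

lemma occ13_2_eq_wordOcc13_2 : occ13_2 π = wordOcc13_2 n (permCode π) := by
  rw [occ13_2, card_filter_range_product (q := fun i j => i + 1 < j ∧
    permVal π i < permVal π j ∧ permVal π j < permVal π (i + 1)) fun _ _ h => h.1]
  exact sum_congr rfl fun i hi => card_filter_occ13_2_at (by simp at hi; omega)

lemma card_filter_occ_eq (a b : ℕ) :
    #{π : Equiv.Perm (Fin n) | occ12_3 π = a ∧ occ13_2 π = b} =
      #{w ∈ codeWords n | wordOcc12_3 n w = a ∧ wordOcc13_2 n w = b} := by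
  classical
  have himage : (univ : Finset (Equiv.Perm (Fin n))).image permCode = codeWords n := by
    refine eq_of_subset_of_card_le (image_subset_iff.2 fun π _ => permCode_mem_codeWords π) ?_
    rw [card_codeWords, card_image_of_injective _ permCode_injective, card_univ,
      Fintype.card_perm, Fintype.card_fin]
  rw [← himage, filter_image, card_image_of_injective _ permCode_injective]
  simp only [occ12_3_eq_wordOcc12_3, occ13_2_eq_wordOcc13_2]

end PermCode

def countWords (m a b r : ℕ) : ℕ :=
  #{w ∈ codeWords m | wordOcc12_3 m w = a ∧ wordOcc13_2 m w = b ∧ w 0 = r}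

def seqCons (r : ℕ) (v : ℕ → ℕ) : ℕ → ℕ
  | 0 => r
  | j + 1 => v j

section Words

variable {m a b r : ℕ} {w v : ℕ → ℕ}

lemma tail_mem_codeWords (hw : w ∈ codeWords (m + 1)) : (fun j => w (j + 1)) ∈ codeWords m := by
  rw [mem_codeWords] at hw ⊢
  refine ⟨fun j hj => ?_, fun j hj => hw.2 (j + 1) (by omega)⟩
  have := hw.1 (j + 1) (by omega)
  omega

lemma seqCons_mem_codeWords (hr : 1 ≤ r) (hrm : r ≤ m + 1) (hv : v ∈ codeWords m) :
    seqCons r v ∈ codeWords (m + 1) := by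
  rw [mem_codeWords] at hv ⊢
  refine ⟨fun j hj => ?_, fun j hj => ?_⟩
  · cases j with
    | zero => exact ⟨hr, hrm⟩
    | succ j => have := hv.1 j (by omega); simp only [seqCons]; omega
  · cases j with
    | zero => omega
    | succ j => exact hv.2 j (by omega)

lemma wordOcc12_3_succ (hm : 1 ≤ m) (w : ℕ → ℕ) :
    wordOcc12_3 (m + 1) w = pairOcc12_3 (w 0) (w 1) + wordOcc12_3 m (fun j => w (j + 1)) := by
  rw [wordOcc12_3, wordOcc12_3, show m + 1 - 1 = m - 1 + 1 by omega, sum_range_succ', add_comm]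

lemma wordOcc13_2_succ (hm : 1 ≤ m) (w : ℕ → ℕ) :
    wordOcc13_2 (m + 1) w = pairOcc13_2 (w 0) (w 1) + wordOcc13_2 m (fun j => w (j + 1)) := by
  rw [wordOcc13_2, wordOcc13_2, show m + 1 - 1 = m - 1 + 1 by omega, sum_range_succ', add_comm]

lemma head_le_wordOcc (hm : 1 ≤ m) (hw : w ∈ codeWords m) :
    w 0 ≤ wordOcc12_3 m w + wordOcc13_2 m w + 2 := by
  induction m generalizing w with
  | zero => omega
  | succ m ih =>
    rcases Nat.eq_zero_or_pos m with rfl | hm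
    · have := (mem_codeWords.1 hw).1 0 one_pos
      omega
    have htail := tail_mem_codeWords hw
    have h1 : 1 ≤ w 1 := ((mem_codeWords.1 htail).1 0 hm).1
    have ih' : w 1 ≤ _ := ih hm htail
    rw [wordOcc12_3_succ hm, wordOcc13_2_succ hm, pairOcc12_3, pairOcc13_2]
    split_ifs <;> omega

lemma countWords_succ_eq_card (hm : 1 ≤ m) (hr : 1 ≤ r) (hrm : r ≤ m + 1) :
    countWords (m + 1) a b r = #{v ∈ codeWords m | pairOcc12_3 r (v 0) + wordOcc12_3 m v = a ∧
      pairOcc13_2 r (v 0) + wordOcc13_2 m v = b} := by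
  refine card_nbij' (fun w j => w (j + 1)) (seqCons r) ?_ ?_ ?_ ?_
  · intro w hw
    simp only [coe_filter, Set.mem_ofPred_eq] at hw ⊢
    obtain ⟨hw, hU, hV, rfl⟩ := hw
    rw [wordOcc12_3_succ hm] at hU
    rw [wordOcc13_2_succ hm] at hV
    exact ⟨tail_mem_codeWords hw, hU, hV⟩
  · intro v hv
    simp only [coe_filter, Set.mem_ofPred_eq] at hv ⊢
    obtain ⟨hv, hU, hV⟩ := hv
    exact ⟨seqCons_mem_codeWords hr hrm hv, by rw [wordOcc12_3_succ hm]; exact hU,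
      by rw [wordOcc13_2_succ hm]; exact hV, rfl⟩
  · intro w hw
    simp only [coe_filter, Set.mem_ofPred_eq] at hw
    funext j
    cases j <;> simp [seqCons, hw.2.2.2]
  · intro v _
    rfl

lemma countWords_succ_one (hm : 1 ≤ m) :
    countWords (m + 1) a b 1 = #{w ∈ codeWords m | wordOcc12_3 m w = a ∧ wordOcc13_2 m w = b} := by
  have h12 (x : ℕ) : pairOcc12_3 1 x = 0 := by unfold pairOcc12_3; split_ifs <;> omega
  have h13 (x : ℕ) : pairOcc13_2 1 x = 0 := by unfold pairOcc13_2; split_ifs <;> omega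
  simp only [countWords_succ_eq_card hm le_rfl (by omega), h12, h13, zero_add]

lemma countWords_succ (hm : 1 ≤ m) (hr : 1 ≤ r) (hrm : r ≤ m + 1) :
    countWords (m + 1) a b r = ∑ s ∈ Icc 1 (a + b + 2),
      if pairOcc12_3 r s ≤ a ∧ pairOcc13_2 r s ≤ b then
        countWords m (a - pairOcc12_3 r s) (b - pairOcc13_2 r s) s else 0 := by
  rw [countWords_succ_eq_card hm hr hrm, card_eq_sum_card_fiberwise (f := fun v => v 0)]
  · refine sum_congr rfl fun s _ => ?_
    rw [filter_filter]
    split_ifs with h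
    · refine congrArg card (filter_congr fun v _ => ⟨?_, ?_⟩)
      · rintro ⟨⟨hU, hV⟩, rfl⟩
        omega
      · rintro ⟨hU, hV, rfl⟩
        omega
    · refine card_eq_zero.2 (filter_eq_empty_iff.2 ?_)
      rintro v _ ⟨⟨hU, hV⟩, rfl⟩
      omega
  · intro v hv
    simp only [coe_filter, Set.mem_ofPred_eq] at hv
    have := head_le_wordOcc hm hv.1
    have := (mem_codeWords.1 hv.1).1 0 hm
    simp only [coe_Icc, Set.mem_Icc]
    omega

lemma countWords_two (hm : 1 ≤ m) : countWords (m + 1) a b 2 = countWords (m + 1) a b 1 := by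
  rw [countWords_succ hm (by norm_num) (by omega), countWords_succ hm le_rfl (by omega)]
  refine sum_congr rfl fun s hs => ?_
  have hs1 : 1 ≤ s := (mem_Icc.1 hs).1
  have h12 : pairOcc12_3 2 s = pairOcc12_3 1 s := by unfold pairOcc12_3; split_ifs <;> omega
  have h13 : pairOcc13_2 2 s = pairOcc13_2 1 s := by unfold pairOcc13_2; split_ifs <;> omega
  rw [h12, h13]

end Words

lemma countWords_transfer (m : ℕ) :
    countWords (m + 4) 0 0 1 = 2 * countWords (m + 3) 0 0 1 ∧
    countWords (m + 4) 0 1 1 = 2 * countWords (m + 3) 0 1 1 + countWords (m + 3) 0 1 3 ∧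
    countWords (m + 4) 0 1 3 = countWords (m + 3) 0 0 1 + countWords (m + 3) 0 1 3 ∧
    countWords (m + 4) 1 0 1 = 2 * countWords (m + 3) 1 0 1 + countWords (m + 3) 1 0 3 ∧
    countWords (m + 4) 1 0 3 = countWords (m + 3) 0 0 1 + countWords (m + 3) 1 0 3 ∧
    countWords (m + 4) 1 1 1 =
      2 * countWords (m + 3) 1 1 1 + countWords (m + 3) 1 1 3 + countWords (m + 3) 1 1 4 ∧
    countWords (m + 4) 1 1 3 = countWords (m + 3) 1 0 1 + countWords (m + 3) 0 1 1 +
      countWords (m + 3) 1 1 3 + countWords (m + 3) 1 1 4 ∧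
    countWords (m + 4) 1 1 4 = countWords (m + 3) 0 0 1 + countWords (m + 3) 1 1 4 := by
  refine ⟨?_, ?_, ?_, ?_, ?_, ?_, ?_, ?_⟩ <;>
  · rw [countWords_succ (by omega) (by norm_num) (by omega)]
    simp [sum_Icc_succ_top, pairOcc12_3, pairOcc13_2, countWords_two, two_mul, add_assoc]

lemma countWords_zero_zero (k : ℕ) : countWords (k + 4) 0 0 1 = 2 ^ (k + 2) := by
  induction k with
  | zero => decide
  | succ k ih =>
    rw [(countWords_transfer (k + 1)).1, ih]
    ring

lemma countWords_zero_one (k : ℕ) :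
    (countWords (k + 4) 0 1 1 : ℤ) = k * 2 ^ (k + 1) + 1 ∧
      (countWords (k + 4) 0 1 3 : ℤ) = 2 ^ (k + 2) - 1 := by
  induction k with
  | zero => decide
  | succ k ih =>
    obtain ⟨-, h011, h013, -⟩ := countWords_transfer (k + 1)
    rw [h011, h013]
    push_cast
    rw [ih.1, ih.2, countWords_zero_zero]
    push_cast
    constructor <;> ring

lemma countWords_one_zero (k : ℕ) :
    (countWords (k + 4) 1 0 1 : ℤ) = k * 2 ^ (k + 1) + 1 ∧
      (countWords (k + 4) 1 0 3 : ℤ) = 2 ^ (k + 2) - 1 := by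
  induction k with
  | zero => decide
  | succ k ih =>
    obtain ⟨-, -, -, h101, h103, -⟩ := countWords_transfer (k + 1)
    rw [h101, h103]
    push_cast
    rw [ih.1, ih.2, countWords_zero_zero]
    push_cast
    constructor <;> ring

lemma countWords_one_one (k : ℕ) :
    (countWords (k + 4) 1 1 1 : ℤ) = (k ^ 2 - k + 2) * 2 ^ k - 2 ∧
      (countWords (k + 4) 1 1 3 : ℤ) = (k - 1) * 2 ^ (k + 2) + 4 ∧
      (countWords (k + 4) 1 1 4 : ℤ) = 2 ^ (k + 2) - 2 := by
  induction k with
  | zero => decide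
  | succ k ih =>
    obtain ⟨-, -, -, -, -, h111, h113, h114⟩ := countWords_transfer (k + 1)
    rw [h111, h113, h114]
    push_cast
    rw [ih.1, ih.2.1, ih.2.2, countWords_zero_zero, (countWords_zero_one k).1,
      (countWords_one_zero k).1]
    push_cast
    refine ⟨?_, ?_, ?_⟩ <;> ring

theorem stmt19 (n : ℕ) (hn : 1 ≤ n) :
    ((Finset.univ.filter (fun π : Equiv.Perm (Fin n) =>
      occ12_3 π = 1 ∧ occ13_2 π = 1)).card : ℚ) =
      ((n : ℚ) ^ 2 - 7 * (n : ℚ) + 14) * (2 : ℚ) ^ ((n : ℤ) - 3) - 2 := by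
  rw [card_filter_occ_eq, ← countWords_succ_one hn]
  match n, hn with
  | 1, _ => rw [show countWords (1 + 1) 1 1 1 = 0 by decide]; norm_num
  | 2, _ => rw [show countWords (2 + 1) 1 1 1 = 0 by decide]; norm_num
  | k + 3, _ =>
    have h := congrArg (Int.cast : ℤ → ℚ) (countWords_one_one k).1
    push_cast at h
    rw [show k + 3 + 1 = k + 4 from rfl, h, show ((k + 3 : ℕ) : ℤ) - 3 = k by push_cast; ring,
      zpow_natCast]
    push_cast
    ring
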